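/- Let (η, ω, V) : ℝ → ℝ^m × ℝⁿ × ℝⁿ be differentiable and satisfy η'(t) = Dᵀω(t), M·ω'(t) = u(t) − D·Γ(V(t))·sin(η(t)) − A·ω(t) − P^l, and T·V'(t) = −E(η(t))·V(t) + Ē_fd for all t, where P^l ∈ ℝⁿ is constant. Let (η̄, ω̄, V̄, ū) be a constant equilibrium, i.e. Dᵀω̄ = 0, 0 = ū − DΓ(V̄)sin(η̄) − Aω̄ − P^l, and E(η̄)V̄ = Ē_fd. Then the storage function U(η, ω, V) = ½(ω − ω̄)ᵀM(ω − ω̄) + W₂(η, V) satisfies, along the solution, d/dt U(η(t), ω(t), V(t)) = −(ω(t) − ω̄)ᵀA(ω(t) − ω̄) − (E(η(t))V(t) − Ē_fd)ᵀT⁻¹(E(η(t))V(t) − Ē_fd) + (ω(t) − ω̄)ᵀ(u(t) − ū). In particular, the power network system with input u and output y = ω is output strictly incrementally passive with respect to (η̄, ω̄, V̄). -/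

import Mathlib

open Matrix Real Filter Topology Set

noncomputable section

/-- `Vec n` is `ℝⁿ`. -/
abbrev Vec (n : ℕ) := Fin n → ℝ

/-- Incidence matrix of the (undirected, arbitrarily oriented) graph whose `m` edges have
endpoints `ep1 k` (positive end) and `ep2 k` (negative end). -/
def incD {n m : ℕ} (ep1 ep2 : Fin m → Fin n) : Matrix (Fin n) (Fin m) ℝ :=
  Matrix.of fun i k => if i = ep1 k then 1 else if i = ep2 k then -1 else 0

/-- `Γ(V) = diag(γ₁,…,γ_m)`, `γ_k = V_i V_j B_{ij}` for edge `k = {i,j}`. -/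
def Gam {n m : ℕ} (ep1 ep2 : Fin m → Fin n) (B : Fin m → ℝ) (V : Vec n) :
    Matrix (Fin m) (Fin m) ℝ :=
  Matrix.diagonal fun k => V (ep1 k) * V (ep2 k) * B k

/-- The matrix `E(η)`. -/
def Emat {n m : ℕ} (ep1 ep2 : Fin m → Fin n) (B : Fin m → ℝ)
    (Bii Xd Xd' : Vec n) (η : Vec m) : Matrix (Fin n) (Fin n) ℝ :=
  Matrix.of fun i j =>
    if i = j then (1 - Bii i * (Xd i - Xd' i)) / (Xd i - Xd' i)
    else -∑ k, (if (ep1 k = i ∧ ep2 k = j) ∨ (ep1 k = j ∧ ep2 k = i)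
      then B k * Real.cos (η k) else 0)

/-- The diagonal matrix `F`. -/
def Fmat {n : ℕ} (Bii Xd Xd' : Vec n) : Matrix (Fin n) (Fin n) ℝ :=
  Matrix.diagonal fun i => (1 - Bii i * (Xd i - Xd' i)) / (Xd i - Xd' i)

/-- componentwise sine -/
def sinv {m : ℕ} (η : Vec m) : Vec m := fun k => Real.sin (η k)
/-- componentwise cosine -/
def cosv {m : ℕ} (η : Vec m) : Vec m := fun k => Real.cos (η k)

/-- The storage function `W₂` with reference point `(ηb, Vb)`. -/
def W2 {n m : ℕ} (ep1 ep2 : Fin m → Fin n) (B : Fin m → ℝ) (Bii Xd Xd' : Vec n)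
    (Efd : Vec n) (ηb : Vec m) (Vb : Vec n) (η : Vec m) (V : Vec n) : ℝ :=
  -((1 : Vec m) ⬝ᵥ (Gam ep1 ep2 B V).mulVec (cosv η))
    + (1 : Vec m) ⬝ᵥ (Gam ep1 ep2 B Vb).mulVec (cosv ηb)
    - ((Gam ep1 ep2 B Vb).mulVec (sinv ηb)) ⬝ᵥ (η - ηb)
    - Efd ⬝ᵥ (V - Vb)
    + (1 / 2) * (V ⬝ᵥ (Fmat Bii Xd Xd').mulVec V)
    - (1 / 2) * (Vb ⬝ᵥ (Fmat Bii Xd Xd').mulVec Vb)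

/-- entrywise absolute value `|D|` of the incidence matrix. -/
def absD {n m : ℕ} (ep1 ep2 : Fin m → Fin n) : Matrix (Fin n) (Fin m) ℝ :=
  Matrix.of fun i k => |incD ep1 ep2 i k|

/-- The matrix `E(η̄) − diag(V̄)⁻¹|D|Γ(V̄)diag(sin η̄)diag(cos η̄)⁻¹diag(sin η̄)|D|ᵀdiag(V̄)⁻¹`
appearing in Assumption 3. -/
def Schur {n m : ℕ} (ep1 ep2 : Fin m → Fin n) (B : Fin m → ℝ) (Bii Xd Xd' : Vec n)
    (ηb : Vec m) (Vb : Vec n) : Matrix (Fin n) (Fin n) ℝ :=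
  Emat ep1 ep2 B Bii Xd Xd' ηb -
    (Matrix.diagonal fun i => (Vb i)⁻¹) * absD ep1 ep2 * Gam ep1 ep2 B Vb *
      Matrix.diagonal (sinv ηb) * (Matrix.diagonal (cosv ηb))⁻¹ *
      Matrix.diagonal (sinv ηb) * (absD ep1 ep2)ᵀ * (Matrix.diagonal fun i => (Vb i)⁻¹)

/-!
`W₂` has gradient `(Γ(V)sin η − Γ(V̄)sin η̄, E(η)V − Ē_fd)`; in the `V`-direction because, on a
graph without self-loops, `E(η) = F − ∑ₖ Bₖ cos ηₖ (e_i e_jᵀ + e_j e_iᵀ)` is the Hessian of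
`V ↦ ½VᵀFV − 1ᵀΓ(V)cos η`. Substituting the dynamics into `(ω − ω̄)ᵀMω̇ + ∇W₂ · (η̇, V̇)`, the
line-flow term `(Γ(V)sin η − Γ(V̄)sin η̄)ᵀDᵀω` cancels against the one coming from `Mω̇` because
`Dᵀω̄ = 0`, and `TV̇ = −(E(η)V − Ē_fd)` turns the `V`-part into the dissipation term.
-/

section Calculus

variable {𝕜 ι : Type*} [NontriviallyNormedField 𝕜] [Fintype ι] {t : 𝕜}

theorem HasDerivAt.dotProduct {x y : 𝕜 → ι → 𝕜} {x' y' : ι → 𝕜}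
    (hx : HasDerivAt x x' t) (hy : HasDerivAt y y' t) :
    HasDerivAt (fun s => x s ⬝ᵥ y s) (x' ⬝ᵥ y t + x t ⬝ᵥ y') t := by
  have h := HasDerivAt.fun_sum (u := Finset.univ) fun i _ =>
    (hasDerivAt_pi.mp hx i).fun_mul (hasDerivAt_pi.mp hy i)
  rw [Finset.sum_add_distrib] at h
  exact h

theorem HasDerivAt.mulVec {κ : Type*} [Fintype κ] [CompleteSpace 𝕜] (Q : Matrix ι κ 𝕜)
    {x : 𝕜 → κ → 𝕜} {x' : κ → 𝕜} (hx : HasDerivAt x x' t) :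
    HasDerivAt (fun s => Q *ᵥ x s) (Q *ᵥ x') t :=
  (Q.mulVecLin.toContinuousLinearMap.hasFDerivAt (x := x t)).comp_hasDerivAt t hx

theorem Matrix.IsSymm.hasDerivAt_half_dotProduct_mulVec_self [CompleteSpace 𝕜] [CharZero 𝕜]
    {Q : Matrix ι ι 𝕜} (hQ : Q.IsSymm) {x : 𝕜 → ι → 𝕜} {x' : ι → 𝕜}
    (hx : HasDerivAt x x' t) :
    HasDerivAt (fun s => 1 / 2 * (x s ⬝ᵥ Q *ᵥ x s)) (x t ⬝ᵥ Q *ᵥ x') t := by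
  have h := (hx.dotProduct (hx.mulVec Q)).const_mul (1 / 2 : 𝕜)
  rwa [dotProduct_comm x', ← vecMul_transpose, hQ.eq, ← dotProduct_mulVec, ← two_mul,
    ← mul_assoc, one_div_mul_cancel two_ne_zero, one_mul] at h

end Calculus

theorem Matrix.eq_diagonal_inv_mulVec_of_diagonal_mulVec_eq {ι K : Type*} [Fintype ι]
    [DecidableEq ι] [Field K] {d x y : ι → K} (hd : ∀ i, d i ≠ 0) (h : diagonal d *ᵥ x = y) :
    x = diagonal (fun i => (d i)⁻¹) *ᵥ y := by
  rw [← h, mulVec_mulVec, diagonal_mul_diagonal]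
  simp [hd]

section Network

variable {n m : ℕ} (ep1 ep2 : Fin m → Fin n) (B : Fin m → ℝ)

theorem Emat_eq_Fmat_sub (hep : ∀ k, ep1 k ≠ ep2 k) (Bii Xd Xd' : Vec n) (η : Vec m) :
    Emat ep1 ep2 B Bii Xd Xd' η = Fmat Bii Xd Xd' -
      ∑ k, (B k * Real.cos (η k)) • (single (ep1 k) (ep2 k) 1 + single (ep2 k) (ep1 k) 1) := by
  ext i j
  rcases eq_or_ne i j with rfl | hij
  · have h₁ : ∀ k, ¬(ep1 k = i ∧ ep2 k = i) := fun k h => hep k (h.1.trans h.2.symm)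
    have h₂ : ∀ k, ¬(ep2 k = i ∧ ep1 k = i) := fun k h => hep k (h.2.trans h.1.symm)
    simp [Emat, Fmat, Matrix.sum_apply, h₁, h₂]
  · simp only [Emat, Fmat, Matrix.of_apply, Matrix.sub_apply, Matrix.sum_apply,
      Matrix.smul_apply, Matrix.add_apply, single_apply, diagonal_apply_ne _ hij, if_neg hij,
      zero_sub, smul_eq_mul, neg_inj]
    refine Finset.sum_congr rfl fun k _ => ?_
    by_cases h₁ : ep1 k = i ∧ ep2 k = j
    · have h₂ : ¬(ep2 k = i ∧ ep1 k = j) := fun h₂ => hij (h₁.1.symm.trans h₂.2)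
      rw [if_pos (Or.inl h₁), if_pos h₁, if_neg h₂]
      ring
    by_cases h₂ : ep2 k = i ∧ ep1 k = j
    · rw [if_pos (Or.inr h₂.symm), if_neg h₁, if_pos h₂]
      ring
    · rw [if_neg (not_or.mpr ⟨h₁, fun h => h₂ h.symm⟩), if_neg h₁, if_neg h₂]
      ring

theorem Emat_mulVec_dotProduct (hep : ∀ k, ep1 k ≠ ep2 k) (Bii Xd Xd' : Vec n) (η : Vec m)
    (V v : Vec n) :
    (Emat ep1 ep2 B Bii Xd Xd' η *ᵥ V) ⬝ᵥ v = (Fmat Bii Xd Xd' *ᵥ V) ⬝ᵥ v -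
      ∑ k, B k * Real.cos (η k) * (V (ep2 k) * v (ep1 k) + V (ep1 k) * v (ep2 k)) := by
  rw [Emat_eq_Fmat_sub ep1 ep2 B hep, sub_mulVec, sub_dotProduct, Matrix.sum_mulVec,
    sum_dotProduct]
  simp only [single_mulVec_eq, add_mulVec, smul_mulVec, add_dotProduct, smul_dotProduct]
  simp [mul_comm]

theorem Gam_mulVec_dotProduct (V : Vec n) (w z : Vec m) :
    (Gam ep1 ep2 B V *ᵥ w) ⬝ᵥ z = ∑ k, V (ep1 k) * V (ep2 k) * B k * w k * z k := by
  simp [Gam, dotProduct, mulVec_diagonal]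

variable {η : ℝ → Vec m} {V : ℝ → Vec n} {η' : Vec m} {V' : Vec n} {t : ℝ}

theorem hasDerivAt_one_dotProduct_Gam_mulVec_cosv (hη : HasDerivAt η η' t)
    (hV : HasDerivAt V V' t) :
    HasDerivAt (fun s => (1 : Vec m) ⬝ᵥ Gam ep1 ep2 B (V s) *ᵥ cosv (η s))
      (∑ k, B k * Real.cos (η t k) * (V t (ep2 k) * V' (ep1 k) + V t (ep1 k) * V' (ep2 k))
        - (Gam ep1 ep2 B (V t) *ᵥ sinv (η t)) ⬝ᵥ η') t := by
  have hVi i : HasDerivAt (fun s => V s i) (V' i) t := hasDerivAt_pi.mp hV i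
  have h := HasDerivAt.fun_sum (u := Finset.univ) fun k _ =>
    (((hVi (ep1 k)).fun_mul (hVi (ep2 k))).mul_const (B k)).fun_mul (hasDerivAt_pi.mp hη k).cos
  simp only [dotProduct_comm (1 : Vec m), Gam_mulVec_dotProduct, cosv, sinv, Pi.one_apply,
    mul_one]
  refine h.congr_deriv ?_
  rw [← Finset.sum_sub_distrib]
  exact Finset.sum_congr rfl fun k _ => by ring

theorem hasDerivAt_W2 (hep : ∀ k, ep1 k ≠ ep2 k) (Bii Xd Xd' Efd : Vec n) (ηb : Vec m)
    (Vb : Vec n) (hη : HasDerivAt η η' t) (hV : HasDerivAt V V' t) :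
    HasDerivAt (fun s => W2 ep1 ep2 B Bii Xd Xd' Efd ηb Vb (η s) (V s))
      ((Gam ep1 ep2 B (V t) *ᵥ sinv (η t) - Gam ep1 ep2 B Vb *ᵥ sinv ηb) ⬝ᵥ η'
        + (Emat ep1 ep2 B Bii Xd Xd' (η t) *ᵥ V t - Efd) ⬝ᵥ V') t := by
  have hF : (Fmat Bii Xd Xd').IsSymm := isSymm_diagonal _
  have h := (((((hasDerivAt_one_dotProduct_Gam_mulVec_cosv ep1 ep2 B hη hV).neg.add_const
    ((1 : Vec m) ⬝ᵥ Gam ep1 ep2 B Vb *ᵥ cosv ηb)).sub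
    ((hasDerivAt_const t (Gam ep1 ep2 B Vb *ᵥ sinv ηb)).dotProduct (hη.sub_const ηb))).sub
    ((hasDerivAt_const t Efd).dotProduct (hV.sub_const Vb))).add
    (hF.hasDerivAt_half_dotProduct_mulVec_self hV)).sub_const
    (1 / 2 * (Vb ⬝ᵥ Fmat Bii Xd Xd' *ᵥ Vb))
  refine h.congr_deriv ?_
  rw [sub_dotProduct, sub_dotProduct, Emat_mulVec_dotProduct ep1 ep2 B hep, dotProduct_mulVec (V t),
    ← mulVec_transpose, hF.eq]
  simp only [zero_dotProduct, zero_add]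
  ring

end Network

theorem output_strict_incremental_passivity_network_general
    {n m : ℕ} (ep1 ep2 : Fin m → Fin n) (hep : ∀ k, ep1 k ≠ ep2 k)
    (B : Fin m → ℝ)
    (Bii Xd Xd' : Vec n)
    (Md Ad Td : Vec n) (hT : ∀ i, 0 < Td i)
    (Efd Pl : Vec n)
    (η : ℝ → Vec m) (ω ω' : ℝ → Vec n) (V V' : ℝ → Vec n) (u : ℝ → Vec n)
    (hη : ∀ t, HasDerivAt η ((incD ep1 ep2)ᵀ.mulVec (ω t)) t)
    (hω : ∀ t, HasDerivAt ω (ω' t) t)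
    (hωdyn : ∀ t, (Matrix.diagonal Md).mulVec (ω' t)
      = u t - (incD ep1 ep2).mulVec ((Gam ep1 ep2 B (V t)).mulVec (sinv (η t)))
        - (Matrix.diagonal Ad).mulVec (ω t) - Pl)
    (hV : ∀ t, HasDerivAt V (V' t) t)
    (hVdyn : ∀ t, (Matrix.diagonal Td).mulVec (V' t)
      = -(Emat ep1 ep2 B Bii Xd Xd' (η t)).mulVec (V t) + Efd)
    (ηb ωb Vb ub : _)
    (heq1 : (incD ep1 ep2)ᵀ.mulVec ωb = 0)
    (heq2 : (0 : Vec n) = ub - (incD ep1 ep2).mulVec ((Gam ep1 ep2 B Vb).mulVec (sinv ηb))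
      - (Matrix.diagonal Ad).mulVec ωb - Pl) :
    ∀ t, HasDerivAt
      (fun s => (1 / 2) * ((ω s - ωb) ⬝ᵥ (Matrix.diagonal Md).mulVec (ω s - ωb))
        + W2 ep1 ep2 B Bii Xd Xd' Efd ηb Vb (η s) (V s))
      (-((ω t - ωb) ⬝ᵥ (Matrix.diagonal Ad).mulVec (ω t - ωb))
        - (((Emat ep1 ep2 B Bii Xd Xd' (η t)).mulVec (V t) - Efd) ⬝ᵥ
            (Matrix.diagonal fun i => (Td i)⁻¹).mulVec
              ((Emat ep1 ep2 B Bii Xd Xd' (η t)).mulVec (V t) - Efd))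
        + (ω t - ωb) ⬝ᵥ (u t - ub)) t := by
  intro t
  set E := Emat ep1 ep2 B Bii Xd Xd' (η t)
  set D := incD ep1 ep2
  set flow := Gam ep1 ep2 B (V t) *ᵥ sinv (η t) - Gam ep1 ep2 B Vb *ᵥ sinv ηb
  have hV' : V' t = (diagonal fun i => (Td i)⁻¹) *ᵥ -(E *ᵥ V t - Efd) :=
    eq_diagonal_inv_mulVec_of_diagonal_mulVec_eq (fun i => (hT i).ne')
      (by rw [hVdyn t, neg_sub, neg_add_eq_sub])
  have hω' : diagonal Md *ᵥ ω' t = (u t - ub) - diagonal Ad *ᵥ (ω t - ωb) - D *ᵥ flow := by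
    rw [eq_sub_iff_add_eq, zero_add] at heq2
    rw [hωdyn t, heq2, mulVec_sub, mulVec_sub]
    abel
  have hflow : flow ⬝ᵥ Dᵀ *ᵥ ω t = (ω t - ωb) ⬝ᵥ D *ᵥ flow := by
    rw [← sub_zero (Dᵀ *ᵥ ω t), ← heq1, ← mulVec_sub, dotProduct_mulVec, vecMul_transpose,
      dotProduct_comm]
  refine (((isSymm_diagonal Md).hasDerivAt_half_dotProduct_mulVec_self
    ((hω t).sub_const ωb)).add (hasDerivAt_W2 ep1 ep2 B hep Bii Xd Xd' Efd ηb Vb (hη t)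
    (hV t))).congr_deriv ?_
  rw [hω', hV', hflow]
  simp only [dotProduct_sub, mulVec_neg, dotProduct_neg]
  ring

/-- Theorem 1: the power network with input `u` and output `y = ω` is
output strictly incrementally passive with respect to the constant equilibrium
`(η̄, ω̄, V̄)`: the storage function `U = ½(ω − ω̄)ᵀM(ω − ω̄) + W₂(η, V)` satisfies the
stated dissipation equality along solutions. -/
theorem output_strict_incremental_passivity_network
    {n m : ℕ} (ep1 ep2 : Fin m → Fin n) (hep : ∀ k, ep1 k ≠ ep2 k)
    (B : Fin m → ℝ) (hB : ∀ k, 0 < B k)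
    (Bii Xd Xd' : Vec n)
    (Md Ad Td : Vec n) (hM : ∀ i, 0 < Md i) (hA : ∀ i, 0 < Ad i) (hT : ∀ i, 0 < Td i)
    (Efd Pl : Vec n)
    (η : ℝ → Vec m) (ω ω' : ℝ → Vec n) (V V' : ℝ → Vec n) (u : ℝ → Vec n)
    (hη : ∀ t, HasDerivAt η ((incD ep1 ep2)ᵀ.mulVec (ω t)) t)
    (hω : ∀ t, HasDerivAt ω (ω' t) t)
    (hωdyn : ∀ t, (Matrix.diagonal Md).mulVec (ω' t)
      = u t - (incD ep1 ep2).mulVec ((Gam ep1 ep2 B (V t)).mulVec (sinv (η t)))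
        - (Matrix.diagonal Ad).mulVec (ω t) - Pl)
    (hV : ∀ t, HasDerivAt V (V' t) t)
    (hVdyn : ∀ t, (Matrix.diagonal Td).mulVec (V' t)
      = -(Emat ep1 ep2 B Bii Xd Xd' (η t)).mulVec (V t) + Efd)
    (ηb ωb Vb ub : _)
    (heq1 : (incD ep1 ep2)ᵀ.mulVec ωb = 0)
    (heq2 : (0 : Vec n) = ub - (incD ep1 ep2).mulVec ((Gam ep1 ep2 B Vb).mulVec (sinv ηb))
      - (Matrix.diagonal Ad).mulVec ωb - Pl)
    (heq3 : (Emat ep1 ep2 B Bii Xd Xd' ηb).mulVec Vb = Efd) :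
    ∀ t, HasDerivAt
      (fun s => (1 / 2) * ((ω s - ωb) ⬝ᵥ (Matrix.diagonal Md).mulVec (ω s - ωb))
        + W2 ep1 ep2 B Bii Xd Xd' Efd ηb Vb (η s) (V s))
      (-((ω t - ωb) ⬝ᵥ (Matrix.diagonal Ad).mulVec (ω t - ωb))
        - (((Emat ep1 ep2 B Bii Xd Xd' (η t)).mulVec (V t) - Efd) ⬝ᵥ
            (Matrix.diagonal fun i => (Td i)⁻¹).mulVec
              ((Emat ep1 ep2 B Bii Xd Xd' (η t)).mulVec (V t) - Efd))
        + (ω t - ωb) ⬝ᵥ (u t - ub)) t :=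
  output_strict_incremental_passivity_network_general ep1 ep2 hep B Bii Xd Xd' Md Ad Td hT Efd Pl η
    ω ω' V V' u hη hω hωdyn hV hVdyn ηb ωb Vb ub heq1 heq2
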